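/- arXiv:2507.13491 — 3 statements merged into one kernel-verified Lean document; each statement's English description precedes it below -/
import Mathlib

section
/- (Policy gradient theorem, finite-horizon form) For a finite MDP with horizon T and a positive differentiable stochastic policy π_θ, the gradient of J(θ) = E_{τ∼π_θ}[Σ_{t=0}^{T} γ^t r(s_t,a_t)] satisfies ∇_θ J(θ) = E_{τ∼π_θ}[(Σ_{t=0}^{T} ∇_θ log π_θ(a_t|s_t)) (Σ_{t=0}^{T} γ^t r(s_t,a_t))]. -/
/-! Each trajectory weight is `θ`-independent factors times `∏ₜ π_θ(aₜ|sₜ)`. By the product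
rule the gradient of the product is `∑ₜ (∏_{j ≠ t} πⱼ) ∇πₜ`, which, since the policy is
positive and so `∇πₜ = πₜ ∇ log πₜ`, is the product itself times `∑ₜ ∇ log πₜ`. -/

section ScoreFunction

variable {ι κ E : Type*} [NormedAddCommGroup E] [NormedSpace ℝ E]

theorem hasFDerivAt_finsetProd_smul_sum_fderiv_log {f : ι → E → ℝ} {s : Finset ι} {x : E}
    (hf : ∀ i ∈ s, DifferentiableAt ℝ (f i) x) (hx : ∀ i ∈ s, f i x ≠ 0) :
    HasFDerivAt (fun y => ∏ i ∈ s, f i y)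
      ((∏ i ∈ s, f i x) • ∑ i ∈ s, fderiv ℝ (fun y => Real.log (f i y)) x) x := by
  classical
  refine (HasFDerivAt.finsetProd fun i hi => (hf i hi).hasFDerivAt).congr_fderiv ?_
  rw [Finset.smul_sum]
  refine Finset.sum_congr rfl fun i hi => ?_
  rw [fderiv.log (hf i hi) (hx i hi), smul_smul, ← Finset.mul_prod_erase s _ hi,
    mul_comm (f i x), mul_assoc, mul_inv_cancel₀ (hx i hi), mul_one]

theorem fderiv_sum_mul_prod_eq_sum_smul_sum_fderiv_log (u : Finset κ) (c : κ → ℝ)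
    {f : κ → ι → E → ℝ} {s : Finset ι} {x : E}
    (hf : ∀ k ∈ u, ∀ i ∈ s, DifferentiableAt ℝ (f k i) x)
    (hx : ∀ k ∈ u, ∀ i ∈ s, f k i x ≠ 0) :
    fderiv ℝ (fun y => ∑ k ∈ u, c k * ∏ i ∈ s, f k i y) x
      = ∑ k ∈ u, (c k * ∏ i ∈ s, f k i x) • ∑ i ∈ s, fderiv ℝ (fun y => Real.log (f k i y)) x := by
  refine (HasFDerivAt.fun_sum fun k hk => ?_).fderiv
  rw [mul_smul]
  exact (hasFDerivAt_finsetProd_smul_sum_fderiv_log (hf k hk) (hx k hk)).const_mul (c k)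

end ScoreFunction

theorem stmt13_general {d : ℕ} {S A : Type} [Fintype S] [Fintype A]
    (T : ℕ) (γ : ℝ)
    (p0 : S → ℝ)
    (ptr : S → A → S → ℝ)
    (r : S → A → ℝ)
    (π : (Fin d → ℝ) → A → S → ℝ)
    (hpos : ∀ θ a s, 0 < π θ a s)
    (hdiff : ∀ a s, Differentiable ℝ (fun θ => π θ a s))
    (θ : Fin d → ℝ) :
    fderiv ℝ (fun θ' => ∑ τ : (Fin (T + 2) → S) × (Fin (T + 1) → A),
        (p0 (τ.1 0) * ∏ t : Fin (T + 1),
            π θ' (τ.2 t) (τ.1 t.castSucc) * ptr (τ.1 t.castSucc) (τ.2 t) (τ.1 t.succ)) *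
        (∑ t : Fin (T + 1), γ ^ (t : ℕ) * r (τ.1 t.castSucc) (τ.2 t))) θ
    = ∑ τ : (Fin (T + 2) → S) × (Fin (T + 1) → A),
        ((p0 (τ.1 0) * ∏ t : Fin (T + 1),
            π θ (τ.2 t) (τ.1 t.castSucc) * ptr (τ.1 t.castSucc) (τ.2 t) (τ.1 t.succ)) *
         (∑ t : Fin (T + 1), γ ^ (t : ℕ) * r (τ.1 t.castSucc) (τ.2 t))) •
        (∑ t : Fin (T + 1),
          fderiv ℝ (fun θ' => Real.log (π θ' (τ.2 t) (τ.1 t.castSucc))) θ) := by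
  have split_policy : ∀ (θ' : Fin d → ℝ) (τ : (Fin (T + 2) → S) × (Fin (T + 1) → A)),
      (p0 (τ.1 0) * ∏ t : Fin (T + 1),
          π θ' (τ.2 t) (τ.1 t.castSucc) * ptr (τ.1 t.castSucc) (τ.2 t) (τ.1 t.succ)) *
        (∑ t : Fin (T + 1), γ ^ (t : ℕ) * r (τ.1 t.castSucc) (τ.2 t))
      = (p0 (τ.1 0) * (∏ t : Fin (T + 1), ptr (τ.1 t.castSucc) (τ.2 t) (τ.1 t.succ)) *
          ∑ t : Fin (T + 1), γ ^ (t : ℕ) * r (τ.1 t.castSucc) (τ.2 t)) *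
        ∏ t : Fin (T + 1), π θ' (τ.2 t) (τ.1 t.castSucc) := by
    intro θ' τ
    rw [Finset.prod_mul_distrib]
    ring
  simp_rw [split_policy]
  exact fderiv_sum_mul_prod_eq_sum_smul_sum_fderiv_log _ _
    (fun τ _ t _ => hdiff (τ.2 t) (τ.1 t.castSucc) θ)
    (fun τ _ t _ => (hpos θ (τ.2 t) (τ.1 t.castSucc)).ne')

/-- Policy gradient theorem, finite-horizon form: for a finite MDP with horizon `T` and a
positive, differentiable stochastic policy `π_θ`, the gradient of
`J(θ) = E_{τ∼π_θ}[∑_{t=0}^T γ^t r(s_t,a_t)]` (expectation a finite sum over trajectories,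
with trajectory probability `P_θ(τ) = p(s₀) ∏_t π_θ(a_t|s_t) p(s_{t+1}|s_t,a_t)`) equals
`E_{τ∼π_θ}[(∑_t ∇_θ log π_θ(a_t|s_t)) (∑_t γ^t r(s_t,a_t))]`. -/
theorem stmt13 {d : ℕ} {S A : Type} [Fintype S] [Fintype A]
    (T : ℕ) (γ : ℝ) (hγ : 0 < γ ∧ γ ≤ 1)
    (p0 : S → ℝ) (hp00 : ∀ s, 0 ≤ p0 s) (hp01 : ∑ s, p0 s = 1)
    (ptr : S → A → S → ℝ) (hptr0 : ∀ s a s', 0 ≤ ptr s a s')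
    (hptr1 : ∀ s a, ∑ s', ptr s a s' = 1)
    (r : S → A → ℝ)
    (π : (Fin d → ℝ) → A → S → ℝ)
    (hpos : ∀ θ a s, 0 < π θ a s)
    (hdiff : ∀ a s, Differentiable ℝ (fun θ => π θ a s))
    (θ : Fin d → ℝ) :
    fderiv ℝ (fun θ' => ∑ τ : (Fin (T + 2) → S) × (Fin (T + 1) → A),
        (p0 (τ.1 0) * ∏ t : Fin (T + 1),
            π θ' (τ.2 t) (τ.1 t.castSucc) * ptr (τ.1 t.castSucc) (τ.2 t) (τ.1 t.succ)) *
        (∑ t : Fin (T + 1), γ ^ (t : ℕ) * r (τ.1 t.castSucc) (τ.2 t))) θ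
    = ∑ τ : (Fin (T + 2) → S) × (Fin (T + 1) → A),
        ((p0 (τ.1 0) * ∏ t : Fin (T + 1),
            π θ (τ.2 t) (τ.1 t.castSucc) * ptr (τ.1 t.castSucc) (τ.2 t) (τ.1 t.succ)) *
         (∑ t : Fin (T + 1), γ ^ (t : ℕ) * r (τ.1 t.castSucc) (τ.2 t))) •
        (∑ t : Fin (T + 1),
          fderiv ℝ (fun θ' => Real.log (π θ' (τ.2 t) (τ.1 t.castSucc))) θ) :=
  stmt13_general T γ p0 ptr r π hpos hdiff θ
end

section
/- (Performance difference via advantage, one-step form) For a finite discounted MDP and policies π, π', V^{π'}(s) − V^{π}(s) = E_{τ∼π'}[Σ_{t=0}^{∞} γ^t A^{π}(s_t, a_t) | s_0 = s], where A^π(s,a) = Q^π(s,a) − V^π(s). In particular, if E_{a∼π'(·|s)}[A^π(s,a)] ≥ 0 for every state s, then V^{π'}(s) ≥ V^{π}(s) for all s (policy improvement). -/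
/-- The `t`-step state distribution of policy `π'` started from `s₀` in a finite MDP. -/
def stateDist {S A : Type} [Fintype S] [Fintype A] [DecidableEq S]
    (p : S → A → S → ℝ) (π' : S → A → ℝ) (s₀ : S) : ℕ → S → ℝ
  | 0 => fun s => if s = s₀ then 1 else 0
  | (t + 1) => fun s'' => ∑ s, ∑ a, stateDist p π' s₀ t s * π' s a * p s a s''

/-- Performance difference via advantage (one-step form): for policies `π, π'` of a finite
discounted MDP, `V^{π'}(s₀) − V^{π}(s₀) = E_{τ∼π'}[∑_t γ^t A^π(s_t,a_t)]`, where
`A^π(s,a) = Q^π(s,a) − V^π(s)`; in particular, if `E_{a∼π'(·|s)}[A^π(s,a)] ≥ 0` for every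
`s` then `V^{π'} ≥ V^{π}` (policy improvement). -/
theorem stmt16 {S A : Type} [Fintype S] [Fintype A] [DecidableEq S]
    (γ : ℝ) (hγ : γ ∈ Set.Ioo (0:ℝ) 1)
    (p : S → A → S → ℝ) (hp0 : ∀ s a s', 0 ≤ p s a s') (hp1 : ∀ s a, ∑ s', p s a s' = 1)
    (r : S → A → ℝ)
    (π π' : S → A → ℝ)
    (hπ0 : ∀ s a, 0 ≤ π s a) (hπ1 : ∀ s, ∑ a, π s a = 1)
    (hπ'0 : ∀ s a, 0 ≤ π' s a) (hπ'1 : ∀ s, ∑ a, π' s a = 1)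
    (V V' : S → ℝ) (Q : S → A → ℝ)
    (hQ : ∀ s a, Q s a = r s a + γ * ∑ s', p s a s' * V s')
    (hV : ∀ s, V s = ∑ a, π s a * Q s a)
    (hV' : ∀ s, V' s = ∑ a, π' s a * (r s a + γ * ∑ s', p s a s' * V' s')) :
    (∀ s₀, V' s₀ - V s₀ =
      ∑' t : ℕ, γ ^ t * ∑ s, stateDist p π' s₀ t s * ∑ a, π' s a * (Q s a - V s)) ∧
    ((∀ s, 0 ≤ ∑ a, π' s a * (Q s a - V s)) → ∀ s, V s ≤ V' s) := by
  obtain ⟨hγ0, hγ1⟩ := hγ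
  set g : S → ℝ := fun s => ∑ a, π' s a * (Q s a - V s) with hg
  set D : S → ℝ := fun s => V' s - V s with hDdef
  -- stateDist is nonnegative
  have hd0 : ∀ s₀ t s, 0 ≤ stateDist p π' s₀ t s := by
    intro s₀ t
    induction t with
    | zero => intro s; simp only [stateDist]; positivity
    | succ n ih =>
      intro s
      simp only [stateDist]
      apply Finset.sum_nonneg; intro x _
      apply Finset.sum_nonneg; intro a _
      exact mul_nonneg (mul_nonneg (ih x) (hπ'0 x a)) (hp0 x a s)
  -- stateDist sums to 1
  have hd1 : ∀ s₀ t, ∑ s, stateDist p π' s₀ t s = 1 := by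
    intro s₀ t
    induction t with
    | zero => simp [stateDist]
    | succ n ih =>
      simp only [stateDist]
      rw [Finset.sum_comm]
      have : ∀ s, ∑ s'', ∑ a, stateDist p π' s₀ n s * π' s a * p s a s''
          = stateDist p π' s₀ n s := by
        intro s
        rw [Finset.sum_comm]
        calc ∑ a, ∑ s'', stateDist p π' s₀ n s * π' s a * p s a s''
            = ∑ a, stateDist p π' s₀ n s * π' s a := by
              apply Finset.sum_congr rfl; intro a _
              rw [← Finset.mul_sum, hp1, mul_one]
          _ = stateDist p π' s₀ n s := by rw [← Finset.mul_sum, hπ'1, mul_one]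
      rw [Finset.sum_congr rfl fun s _ => this s, ih]
  -- Bellman-style recursion for the difference D
  have hrec : ∀ s, D s = g s + γ * ∑ a, π' s a * ∑ s', p s a s' * D s' := by
    intro s
    have e1 : g s = (∑ a, π' s a * Q s a) - V s := by
      simp only [hg, mul_sub, Finset.sum_sub_distrib, ← Finset.sum_mul, hπ'1, one_mul]
    have e2 : ∑ a, π' s a * Q s a
        = (∑ a, π' s a * r s a) + γ * ∑ a, π' s a * ∑ s', p s a s' * V s' := by
      simp only [hQ, mul_add, Finset.sum_add_distrib, Finset.mul_sum]
      ring_nf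
      congr 1
      exact Finset.sum_congr rfl fun a _ => Finset.sum_congr rfl fun s' _ => by ring
    have e3 : V' s = (∑ a, π' s a * r s a) + γ * ∑ a, π' s a * ∑ s', p s a s' * V' s' := by
      rw [hV' s]
      simp only [mul_add, Finset.sum_add_distrib, Finset.mul_sum]
      congr 1
      exact Finset.sum_congr rfl fun a _ => Finset.sum_congr rfl fun s' _ => by ring
    have e4 : ∑ a, π' s a * ∑ s', p s a s' * D s'
        = (∑ a, π' s a * ∑ s', p s a s' * V' s') - ∑ a, π' s a * ∑ s', p s a s' * V s' := by
      simp only [hDdef, mul_sub, Finset.sum_sub_distrib, Finset.mul_sum]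
    simp only [hDdef]
    rw [e1, e2, e3, e4]
    ring
  -- adjoint identity
  have hadj : ∀ (s₀ : S) (n : ℕ) (h : S → ℝ),
      ∑ s'', stateDist p π' s₀ (n+1) s'' * h s''
        = ∑ s, stateDist p π' s₀ n s * ∑ a, π' s a * ∑ s', p s a s' * h s' := by
    intro s₀ n h
    conv_lhs => simp only [stateDist]
    simp only [Finset.sum_mul, Finset.mul_sum]
    rw [Finset.sum_comm]
    apply Finset.sum_congr rfl; intro s _
    rw [Finset.sum_comm]
    apply Finset.sum_congr rfl; intro a _
    apply Finset.sum_congr rfl; intro s'' _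
    ring
  -- partial sum identity
  have hpartial : ∀ s₀ n, D s₀ =
      (∑ t ∈ Finset.range n, γ ^ t * ∑ s, stateDist p π' s₀ t s * g s)
        + γ ^ n * ∑ s, stateDist p π' s₀ n s * D s := by
    intro s₀ n
    induction n with
    | zero => simp [stateDist]
    | succ n ih =>
      rw [Finset.sum_range_succ]
      have key : ∑ s, stateDist p π' s₀ n s * D s
          = (∑ s, stateDist p π' s₀ n s * g s)
            + γ * ∑ s, stateDist p π' s₀ (n+1) s * D s := by
        rw [hadj s₀ n D]
        rw [show (∑ s, stateDist p π' s₀ n s * D s)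
            = ∑ s, stateDist p π' s₀ n s * (g s + γ * ∑ a, π' s a * ∑ s', p s a s' * D s')
          from Finset.sum_congr rfl fun s _ => by rw [← hrec s]]
        simp only [mul_add, Finset.sum_add_distrib, Finset.mul_sum]
        congr 1
        exact Finset.sum_congr rfl fun x _ => Finset.sum_congr rfl fun a _ =>
          Finset.sum_congr rfl fun i _ => by ring
      rw [ih, key]
      ring
  rcases isEmpty_or_nonempty S with hS | hS
  · exact ⟨fun s₀ => (hS.false s₀).elim, fun _ s => (hS.false s).elim⟩
  -- bounds
  have hSne : (Finset.univ : Finset S).Nonempty := Finset.univ_nonempty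
  set C : ℝ := Finset.univ.sup' hSne (fun s => |D s|) with hC
  set Cg : ℝ := Finset.univ.sup' hSne (fun s => |g s|) with hCg
  have havg : ∀ (h : S → ℝ) (B : ℝ), (∀ s, |h s| ≤ B) → ∀ s₀ n,
      |∑ s, stateDist p π' s₀ n s * h s| ≤ B := by
    intro h B hB s₀ n
    calc |∑ s, stateDist p π' s₀ n s * h s|
        ≤ ∑ s, |stateDist p π' s₀ n s * h s| := Finset.abs_sum_le_sum_abs _ _
      _ ≤ ∑ s, stateDist p π' s₀ n s * B := by
          apply Finset.sum_le_sum; intro s _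
          rw [abs_mul, abs_of_nonneg (hd0 s₀ n s)]
          exact mul_le_mul_of_nonneg_left (hB s) (hd0 s₀ n s)
      _ = B := by rw [← Finset.sum_mul, hd1, one_mul]
  have hCb : ∀ s, |D s| ≤ C := fun s => Finset.le_sup' (fun s => |D s|) (Finset.mem_univ s)
  have hCgb : ∀ s, |g s| ≤ Cg := fun s => Finset.le_sup' (fun s => |g s|) (Finset.mem_univ s)
  -- the series is summable
  have hsummable : ∀ s₀, Summable (fun t : ℕ => γ ^ t * ∑ s, stateDist p π' s₀ t s * g s) := by
    intro s₀
    apply Summable.of_norm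
    apply Summable.of_nonneg_of_le (fun t => norm_nonneg _)
      (fun t => ?_) (Summable.mul_right Cg (summable_geometric_of_lt_one hγ0.le hγ1))
    rw [Real.norm_eq_abs, abs_mul, abs_pow, abs_of_nonneg hγ0.le]
    exact mul_le_mul_of_nonneg_left (havg g Cg hCgb s₀ t) (pow_nonneg hγ0.le t)
  -- partial sums tend to D s₀
  have hlim : ∀ s₀, Filter.Tendsto
      (fun n => ∑ t ∈ Finset.range n, γ ^ t * ∑ s, stateDist p π' s₀ t s * g s)
      Filter.atTop (nhds (D s₀)) := by
    intro s₀
    have h1 : ∀ n, ∑ t ∈ Finset.range n, γ ^ t * ∑ s, stateDist p π' s₀ t s * g s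
        = D s₀ - γ ^ n * ∑ s, stateDist p π' s₀ n s * D s := by
      intro n; rw [hpartial s₀ n]; ring
    simp only [h1]
    have h2 : Filter.Tendsto (fun n : ℕ => γ ^ n * ∑ s, stateDist p π' s₀ n s * D s)
        Filter.atTop (nhds 0) := by
      apply squeeze_zero_norm (fun n => ?_)
        (by simpa using (tendsto_pow_atTop_nhds_zero_of_lt_one hγ0.le hγ1).mul_const C)
      rw [Real.norm_eq_abs, abs_mul, abs_pow, abs_of_nonneg hγ0.le]
      exact mul_le_mul_of_nonneg_left (havg D C hCb s₀ n) (pow_nonneg hγ0.le n)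
    have := Filter.Tendsto.sub (tendsto_const_nhds (x := D s₀)) h2
    simpa using this
  have hmain : ∀ s₀, V' s₀ - V s₀ =
      ∑' t : ℕ, γ ^ t * ∑ s, stateDist p π' s₀ t s * ∑ a, π' s a * (Q s a - V s) := by
    intro s₀
    have := ((hsummable s₀).hasSum).tendsto_sum_nat
    have h := tendsto_nhds_unique (hlim s₀) this
    simpa only [hg, hDdef] using h
  refine ⟨hmain, fun hpos s => ?_⟩
  have h0 : 0 ≤ V' s - V s := by
    rw [hmain s]
    apply tsum_nonneg
    intro t
    apply mul_nonneg (pow_nonneg hγ0.le t)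
    apply Finset.sum_nonneg; intro x _
    exact mul_nonneg (hd0 s t x) (hpos x)
  linarith
end

section
/- (Fixed point of Bellman operator equals supremum over policies) For a finite discounted MDP, the unique fixed point Q* of the Bellman optimality operator satisfies Q*(s,a) = max_{π} Q^π(s,a) for every (s,a), where the maximum is over deterministic stationary policies, and it is attained by any greedy policy with respect to Q*. -/
/-- The unique fixed point `Q*` of the Bellman optimality operator of a finite discounted
MDP satisfies `Q*(s,a) = max_π Q^π(s,a)` over deterministic stationary policies, and the
maximum is attained by any greedy policy with respect to `Q*`. -/
theorem stmt19 {S A : Type} [Fintype S] [Fintype A] [Nonempty A]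
    (γ : ℝ) (hγ : γ ∈ Set.Ioo (0:ℝ) 1)
    (p : S → A → S → ℝ) (hp0 : ∀ s a s', 0 ≤ p s a s') (hp1 : ∀ s a, ∑ s', p s a s' = 1)
    (r : S → A → ℝ)
    (Qpi : (S → A) → S → A → ℝ)
    (hQpi : ∀ π s a, Qpi π s a = r s a + γ * ∑ s', p s a s' * Qpi π s' (π s'))
    (Qstar : S → A → ℝ)
    (hQstar : ∀ s a, Qstar s a = r s a + γ * ∑ s', p s a s' *
      Finset.univ.sup' Finset.univ_nonempty (fun a' => Qstar s' a')) :
    (∀ s a, IsGreatest {q : ℝ | ∃ π : S → A, Qpi π s a = q} (Qstar s a)) ∧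
    (∀ π : S → A, (∀ s a, Qstar s a ≤ Qstar s (π s)) → Qpi π = Qstar) := by
  obtain ⟨hγ0, hγ1⟩ := hγ
  -- Part 2: any greedy policy's Q equals Q*
  have key : ∀ π : S → A, (∀ s a, Qstar s a ≤ Qstar s (π s)) → Qpi π = Qstar := by
    intro π hg
    have hVeq : ∀ s', Finset.univ.sup' Finset.univ_nonempty (fun a' => Qstar s' a')
        = Qstar s' (π s') := fun s' =>
      le_antisymm (Finset.sup'_le _ _ (fun a' _ => hg s' a'))
        (Finset.le_sup' _ (Finset.mem_univ _))
    have hQs : ∀ s a, Qstar s a = r s a + γ * ∑ s', p s a s' * Qstar s' (π s') := by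
      intro s a
      rw [hQstar]
      congr 1
      congr 1
      exact Finset.sum_congr rfl (fun s' _ => by rw [hVeq])
    cases isEmpty_or_nonempty S with
    | inl h => funext s; exact (h.false s).elim
    | inr h =>
      have hne : (Finset.univ : Finset (S × A)).Nonempty := Finset.univ_nonempty
      set D : S × A → ℝ := fun x => |Qpi π x.1 x.2 - Qstar x.1 x.2| with hD
      set M := Finset.univ.sup' hne D with hM
      have hMle : ∀ s a, D (s, a) ≤ M := fun s a => Finset.le_sup' D (Finset.mem_univ _)
      have hstep : ∀ s a, D (s, a) ≤ γ * M := by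
        intro s a
        have h1 : Qpi π s a - Qstar s a
            = γ * ∑ s', p s a s' * (Qpi π s' (π s') - Qstar s' (π s')) := by
          rw [hQpi, hQs, add_sub_add_left_eq_sub, ← mul_sub, ← Finset.sum_sub_distrib]
          congr 1
          exact Finset.sum_congr rfl (fun s' _ => (mul_sub _ _ _).symm)
        calc D (s, a) = γ * |∑ s', p s a s' * (Qpi π s' (π s') - Qstar s' (π s'))| := by
              show |Qpi π s a - Qstar s a| = _
              rw [h1, abs_mul, abs_of_pos hγ0]
          _ ≤ γ * ∑ s', p s a s' * D (s', π s') := by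
              apply mul_le_mul_of_nonneg_left _ hγ0.le
              refine (Finset.abs_sum_le_sum_abs _ _).trans ?_
              apply Finset.sum_le_sum
              intro s' _
              rw [abs_mul, abs_of_nonneg (hp0 s a s')]
          _ ≤ γ * ∑ s', p s a s' * M := by
              apply mul_le_mul_of_nonneg_left _ hγ0.le
              exact Finset.sum_le_sum fun s' _ =>
                mul_le_mul_of_nonneg_left (hMle s' (π s')) (hp0 s a s')
          _ = γ * M := by rw [← Finset.sum_mul, hp1, one_mul]
      have hMγ : M ≤ γ * M := Finset.sup'_le _ _ (fun x _ => hstep x.1 x.2)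
      have hM0 : 0 ≤ M :=
        le_trans (abs_nonneg _) (hMle (Classical.arbitrary S) (Classical.arbitrary A))
      have hMz : M ≤ 0 := by nlinarith
      funext s a
      have h2 : |Qpi π s a - Qstar s a| ≤ 0 := (hMle s a).trans hMz
      have := abs_nonpos_iff.mp h2
      linarith [sub_eq_zero.mp this, this]
  -- Domination: Qpi π ≤ Qstar pointwise
  have dom : ∀ (π : S → A) (s : S) (a : A), Qpi π s a ≤ Qstar s a := by
    intro π s a
    have hS : Nonempty S := ⟨s⟩
    have hne : (Finset.univ : Finset (S × A)).Nonempty := Finset.univ_nonempty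
    set F : S × A → ℝ := fun x => Qstar x.1 x.2 - Qpi π x.1 x.2 with hF
    set m := Finset.univ.inf' hne F with hm
    have hmle : ∀ s a, m ≤ F (s, a) := fun s a => Finset.inf'_le F (Finset.mem_univ _)
    have hstep : ∀ s a, γ * m ≤ F (s, a) := by
      intro s a
      have h1 : F (s, a)
          = γ * ∑ s', p s a s' * ((Finset.univ.sup' Finset.univ_nonempty
              (fun a' => Qstar s' a')) - Qpi π s' (π s')) := by
        show Qstar s a - Qpi π s a = _
        rw [hQstar, hQpi, add_sub_add_left_eq_sub, ← mul_sub, ← Finset.sum_sub_distrib]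
        congr 1
        exact Finset.sum_congr rfl (fun s' _ => (mul_sub _ _ _).symm)
      rw [h1]
      have : ∀ s' ∈ Finset.univ (α := S), p s a s' * m ≤ p s a s' *
          ((Finset.univ.sup' Finset.univ_nonempty (fun a' => Qstar s' a')) - Qpi π s' (π s')) := by
        intro s' _
        apply mul_le_mul_of_nonneg_left _ (hp0 s a s')
        refine (hmle s' (π s')).trans ?_
        have : Qstar s' (π s') ≤ Finset.univ.sup' Finset.univ_nonempty
            (fun a' => Qstar s' a') := Finset.le_sup' _ (Finset.mem_univ _)
        show Qstar s' (π s') - Qpi π s' (π s') ≤ _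
        linarith
      calc γ * m = γ * ∑ s', p s a s' * m := by rw [← Finset.sum_mul, hp1, one_mul]
        _ ≤ _ := mul_le_mul_of_nonneg_left (Finset.sum_le_sum this) hγ0.le
    have hmγ : γ * m ≤ m := Finset.le_inf' _ _ (fun x _ => hstep x.1 x.2)
    have hm0 : 0 ≤ m := by nlinarith
    have := (hm0.trans (hmle s a))
    show Qpi π s a ≤ Qstar s a
    have h3 : (0:ℝ) ≤ Qstar s a - Qpi π s a := this
    linarith
  -- Greedy policy existence
  have hex : ∀ s : S, ∃ a : A, ∀ a', Qstar s a' ≤ Qstar s a := by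
    intro s
    obtain ⟨b, _, hb⟩ := Finset.exists_max_image (Finset.univ : Finset A) (Qstar s)
      ⟨Classical.arbitrary A, Finset.mem_univ _⟩
    exact ⟨b, fun a' => hb a' (Finset.mem_univ _)⟩
  choose π₀ hπ₀ using hex
  have hgreedy : Qpi π₀ = Qstar := key π₀ (fun s a => hπ₀ s a)
  refine ⟨fun s a => ⟨⟨π₀, by rw [hgreedy]⟩, ?_⟩, key⟩
  rintro q ⟨π, rfl⟩
  exact dom π s a
end
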